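/- Fix an odd integer n ≥ 5. Let C_n := [cos((i−j)π/n)]_{0≤i,j≤n−1} and C_{n,ε} := C_n + ε I_n. Then there exists ε_0 > 0 such that for every 0 < ε < ε_0 there exists δ > 0 with the property: for every even integer k with 2 ≤ k ≤ n−3 and every real α ∈ [k−δ, k+δ], the matrix |C_{n,ε}|_∘^{∘α} := [|(C_{n,ε})_{ij}|^α] is positive semi-definite. -/

import Mathlib

/-!
`C_n` is the Gram matrix of the vectors `(cos θᵢ, sin θᵢ)`, `θᵢ = iπ/n`, so by the Schur product
theorem its even Hadamard powers `C_n^{∘k} = |C_n|^{∘k}` are positive semidefinite. The difference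
`|C_{n,ε}|^{∘α} - C_n^{∘k}` is, at `α = k`, diagonal with entries `(1 + ε)^k - 1 > 0`; by
continuity in `α` it stays diagonally dominant for `α` near `k`, and a diagonally dominant
symmetric matrix is positive semidefinite by Gershgorin's theorem. Only finitely many `k` occur,
so a single `δ` works.
-/

/-- The `α`th entrywise absolute power `[|a_ij|^α]` of a real matrix, using the real
power function `Real.rpow` (so that `0 ^ 0 = 1`). -/
noncomputable def absHadamardPower {n : ℕ} (A : Matrix (Fin n) (Fin n) ℝ) (α : ℝ) :
    Matrix (Fin n) (Fin n) ℝ :=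
  Matrix.of fun i j => |A i j| ^ α

open Matrix Finset Filter Topology Metric Real

section

variable {ι : Type*} [Fintype ι]

theorem Matrix.IsHermitian.posSemidef_of_sum_abs_offDiag_le [DecidableEq ι]
    {A : Matrix ι ι ℝ} (hA : A.IsHermitian) (h : ∀ i, ∑ j ∈ univ.erase i, |A i j| ≤ A i i) :
    A.PosSemidef := by
  rw [hA.posSemidef_iff_eigenvalues_nonneg]
  intro i
  rw [Pi.zero_apply]
  have hμ : Module.End.HasEigenvalue (toLin' A) (hA.eigenvalues i) := by
    rw [Module.End.hasEigenvalue_iff_mem_spectrum, Matrix.spectrum_toLin']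
    exact hA.eigenvalues_mem_spectrum_real i
  obtain ⟨k, hk⟩ := eigenvalue_mem_ball hμ
  rw [mem_closedBall, Real.dist_eq] at hk
  simp only [Real.norm_eq_abs] at hk
  linarith [h k, (abs_le.1 hk).1]

theorem Matrix.eventually_posSemidef_of_tendsto_diagonal [DecidableEq ι] {X : Type*}
    {l : Filter X} {B : X → Matrix ι ι ℝ} {d : ι → ℝ} (hd : ∀ i, 0 < d i)
    (hB : Tendsto B l (𝓝 (diagonal d))) (hB_symm : ∀ᶠ x in l, (B x).IsHermitian) :
    ∀ᶠ x in l, (B x).PosSemidef := by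
  have hentry i j : Tendsto (fun x => B x i j) l (𝓝 (diagonal d i j)) :=
    (hB.apply_nhds i).apply_nhds j
  have hrow i : Tendsto (fun x => ∑ j ∈ univ.erase i, |B x i j|) l (𝓝 0) := by
    convert tendsto_finsetSum _ fun j _ => (hentry i j).abs using 2
    refine (sum_eq_zero fun j hj => ?_).symm
    rw [diagonal_apply_ne _ (ne_of_mem_erase hj).symm, abs_zero]
  have hdom : ∀ᶠ x in l, ∀ i, ∑ j ∈ univ.erase i, |B x i j| < B x i i :=
    eventually_all.2 fun i => (hrow i).eventually_lt (hentry i i) (by simpa using hd i)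
  filter_upwards [hdom, hB_symm] with x hx hx_symm
  exact hx_symm.posSemidef_of_sum_abs_offDiag_le fun i => (hx i).le

theorem Matrix.PosSemidef.map_pow {A : Matrix ι ι ℝ} (hA : A.PosSemidef) (k : ℕ) :
    (A.map (· ^ k)).PosSemidef := by
  induction k with
  | zero =>
    convert posSemidef_vecMulVec_self_star (1 : ι → ℝ)
    ext
    simp [vecMulVec]
  | succ k ih =>
    have h : A.map (· ^ (k + 1)) = A.map (· ^ k) ⊙ A := by
      ext
      simp [pow_succ]
    rw [h]
    exact ih.hadamard hA

theorem Matrix.posSemidef_cos_sub (θ : ι → ℝ) : (of fun i j => cos (θ i - θ j)).PosSemidef := by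
  have h : (of fun i j => cos (θ i - θ j)) =
      vecMulVec (cos ∘ θ) (star (cos ∘ θ)) + vecMulVec (sin ∘ θ) (star (sin ∘ θ)) := by
    ext i j
    simp [vecMulVec_apply, cos_sub]
  rw [h]
  exact (posSemidef_vecMulVec_self_star _).add (posSemidef_vecMulVec_self_star _)

end

theorem Finset.exists_pos_forall_closedBall_of_eventually {ι X : Type*} [PseudoMetricSpace X]
    (K : Finset ι) {c : ι → X} {P : ι → X → Prop} (h : ∀ k ∈ K, ∀ᶠ x in 𝓝 (c k), P k x) :
    ∃ δ > 0, ∀ k ∈ K, ∀ x ∈ closedBall (c k) δ, P k x := by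
  have hsmall : ∀ᶠ δ in 𝓝 (0 : ℝ), ∀ k ∈ K, closedBall (c k) δ ⊆ {x | P k x} :=
    (eventually_all_finset K).2 fun k hk => eventually_closedBall_subset (h k hk)
  have hpos : Set.Ioi (0 : ℝ) ∈ 𝓝[>] 0 := self_mem_nhdsWithin
  obtain ⟨δ, hδ, hδ_pos⟩ := ((hsmall.filter_mono nhdsWithin_le_nhds).and hpos).exists
  exact ⟨δ, hδ_pos, fun k hk x hx => hδ k hk hx⟩

section

variable {n : ℕ}

theorem Matrix.IsHermitian.absHadamardPower {A : Matrix (Fin n) (Fin n) ℝ} (hA : A.IsHermitian)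
    (α : ℝ) : (absHadamardPower A α).IsHermitian := by
  ext i j
  simp only [conjTranspose_apply, star_trivial, _root_.absHadamardPower, of_apply]
  rw [← hA.apply i j, star_trivial]

theorem continuousAt_absHadamardPower (A : Matrix (Fin n) (Fin n) ℝ) {α : ℝ} (hα : α ≠ 0) :
    ContinuousAt (absHadamardPower A) α :=
  continuousAt_pi.2 fun _ => continuousAt_pi.2 fun _ => continuousAt_const_rpow' hα

theorem absHadamardPower_natCast_of_even (A : Matrix (Fin n) (Fin n) ℝ) {k : ℕ} (hk : Even k) :
    absHadamardPower A k = A.map (· ^ k) := by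
  ext i j
  simp [absHadamardPower, hk.pow_abs]

theorem eventually_posSemidef_absHadamardPower_add_diagonal {A : Matrix (Fin n) (Fin n) ℝ}
    (hA : A.PosSemidef) {e : Fin n → ℝ} (he : ∀ i, 0 < e i) {k : ℕ} (hk : Even k) (hk0 : k ≠ 0) :
    ∀ᶠ α in 𝓝 (k : ℝ), (absHadamardPower (A + diagonal e) α).PosSemidef := by
  have hP : (absHadamardPower A k).PosSemidef := by
    rw [absHadamardPower_natCast_of_even A hk]
    exact hA.map_pow k
  have hlim : absHadamardPower (A + diagonal e) k - absHadamardPower A k =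
      diagonal fun i => (A i i + e i) ^ k - A i i ^ k := by
    ext i j
    rcases eq_or_ne i j with rfl | hij
    · simp [absHadamardPower, hk.pow_abs]
    · simp [absHadamardPower, hij]
  have hd i : 0 < (A i i + e i) ^ k - A i i ^ k :=
    sub_pos.2 (pow_lt_pow_left₀ (lt_add_of_pos_right _ (he i)) hA.diag_nonneg hk0)
  have htendsto : Tendsto (fun α => absHadamardPower (A + diagonal e) α - absHadamardPower A k)
      (𝓝 (k : ℝ)) (𝓝 (diagonal fun i => (A i i + e i) ^ k - A i i ^ k)) := by
    rw [← hlim]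
    exact ((continuousAt_absHadamardPower _ (Nat.cast_ne_zero.2 hk0)).sub continuousAt_const)
  have hsymm α : (absHadamardPower (A + diagonal e) α - absHadamardPower A k).IsHermitian :=
    ((hA.isHermitian.add (isHermitian_diagonal e)).absHadamardPower α).sub hP.isHermitian
  filter_upwards [eventually_posSemidef_of_tendsto_diagonal hd htendsto (.of_forall hsymm)]
    with α hα
  simpa using hP.add hα

end

theorem abs_hadamard_power_cos_psd_near_even_integers_odd_case_general (n : ℕ) :
    ∃ ε₀ > (0 : ℝ), ∀ ε : ℝ, 0 < ε → ε < ε₀ →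
      ∃ δ > (0 : ℝ), ∀ k : ℕ, Even k → 2 ≤ k → k + 3 ≤ n →
        ∀ α : ℝ, (k : ℝ) - δ ≤ α → α ≤ (k : ℝ) + δ →
          (absHadamardPower
            (Matrix.of fun i j : Fin n =>
              Real.cos (((i : ℝ) - (j : ℝ)) * Real.pi / (n : ℝ)) +
                (if i = j then ε else 0))
            α).PosSemidef := by
  refine ⟨1, one_pos, fun ε hε _ => ?_⟩
  set C : Matrix (Fin n) (Fin n) ℝ := of fun i j => cos (((i : ℝ) - j) * π / n)
  have hC : C.PosSemidef := by
    convert posSemidef_cos_sub fun i : Fin n => (i : ℝ) * π / n using 4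
    rw [sub_mul, sub_div]
  have hCε : (of fun i j : Fin n => cos (((i : ℝ) - j) * π / n) + if i = j then ε else 0) =
      C + diagonal fun _ => ε := by
    ext i j
    simp [C, diagonal_apply]
  obtain ⟨δ, hδ, hpsd⟩ := (range n).exists_pos_forall_closedBall_of_eventually
    (c := ((↑) : ℕ → ℝ)) (P := fun k α => Even k → 2 ≤ k →
      (absHadamardPower (C + diagonal fun _ => ε) α).PosSemidef) fun k _ => by
    simp only [eventually_imp_distrib_left]
    exact fun hk hk2 => eventually_posSemidef_absHadamardPower_add_diagonal hC (fun _ => hε) hk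
      (by omega)
  refine ⟨δ, hδ, fun k hk hk2 hkn α hα₁ hα₂ => ?_⟩
  rw [hCε]
  refine hpsd k (mem_range.2 (by omega)) α ?_ hk hk2
  rw [mem_closedBall, Real.dist_eq, abs_sub_le_iff]
  constructor <;> linarith

/-- For odd `n ≥ 5` and `C_{n,ε} = [cos((i-j)π/n)] + ε I_n` with `ε > 0` small
enough, there is `δ > 0` such that for every even integer `k` with `2 ≤ k ≤ n-3` and
every `α ∈ [k-δ, k+δ]`, the matrix `[|(C_{n,ε})_{ij}|^α]` is positive semi-definite. -/
theorem abs_hadamard_power_cos_psd_near_even_integers_odd_case (n : ℕ) (hn : 5 ≤ n)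
    (hno : Odd n) :
    ∃ ε₀ > (0 : ℝ), ∀ ε : ℝ, 0 < ε → ε < ε₀ →
      ∃ δ > (0 : ℝ), ∀ k : ℕ, Even k → 2 ≤ k → k + 3 ≤ n →
        ∀ α : ℝ, (k : ℝ) - δ ≤ α → α ≤ (k : ℝ) + δ →
          (absHadamardPower
            (Matrix.of fun i j : Fin n =>
              Real.cos (((i : ℝ) - (j : ℝ)) * Real.pi / (n : ℝ)) +
                (if i = j then ε else 0))
            α).PosSemidef :=
  abs_hadamard_power_cos_psd_near_even_integers_odd_case_general n
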